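/- Let P, P_n (n ≥ 1) be weakly compact convex sets of probability measures on a Polish space. If KL(P_n‖P) + KL(P‖P_n) → 0 as n → ∞, then V(P_n,P) → 0 and JS(P_n,P) → 0. -/

import Mathlib

open MeasureTheory Real ENNReal Filter Topology
open scoped Classical

noncomputable def klDiv {X : Type*} [MeasurableSpace X] (μ ν : Measure X) : EReal :=
  if μ ≪ ν ∧ Integrable (fun x => Real.log (μ.rnDeriv ν x).toReal) μ
  then ((∫ x, Real.log (μ.rnDeriv ν x).toReal ∂μ : ℝ) : EReal)
  else ⊤

noncomputable def tvDist {X : Type*} [MeasurableSpace X] (μ ν : Measure X) : ℝ :=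
  ⨆ A : {A : Set X // MeasurableSet A}, |(μ A).toReal - (ν A).toReal|


noncomputable def genKL {X : Type*} [MeasurableSpace X]
    (P Q : Set (ProbabilityMeasure X)) : EReal :=
  ⨆ μ ∈ P, ⨅ ν ∈ Q, klDiv μ.toMeasure ν.toMeasure

noncomputable def genV {X : Type*} [MeasurableSpace X]
    (P Q : Set (ProbabilityMeasure X)) : ℝ :=
  max (⨆ μ : P, ⨅ ν : Q, tvDist μ.1.toMeasure ν.1.toMeasure)
      (⨆ ν : Q, ⨅ μ : P, tvDist μ.1.toMeasure ν.1.toMeasure)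

def ConvexPM {X : Type*} [MeasurableSpace X] (P : Set (ProbabilityMeasure X)) : Prop :=
  ∀ μ ∈ P, ∀ ν ∈ P, ∀ a b : ℝ≥0∞, a + b = 1 →
    ∃ κ ∈ P, κ.toMeasure = a • μ.toMeasure + b • ν.toMeasure

def midSet {X : Type*} [MeasurableSpace X]
    (P Q : Set (ProbabilityMeasure X)) : Set (ProbabilityMeasure X) :=
  {κ | ∃ μ ∈ P, ∃ ν ∈ Q, κ.toMeasure = (2:ℝ≥0∞)⁻¹ • μ.toMeasure + (2:ℝ≥0∞)⁻¹ • ν.toMeasure}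

noncomputable def genJS {X : Type*} [MeasurableSpace X]
    (P Q : Set (ProbabilityMeasure X)) : EReal :=
  ((1/2 : ℝ) : EReal) * genKL P (midSet P Q) + ((1/2 : ℝ) : EReal) * genKL Q (midSet P Q)

/-! With `f = dμ/dν`, the pointwise bound `(√f - 1)² ≤ f log f - f + 1` makes the squared
Hellinger distance at most `KL(μ‖ν)`; writing `|f - 1| = |√f - 1| (√f + 1)` and applying
Cauchy–Schwarz gives `V(μ, ν) ≤ ∫ |f - 1| dν ≤ 2 √KL(μ‖ν)`. Hence each one-sided total-variation
excess of `Pn n` over `P` and of `P` over `Pn n` is controlled by the corresponding one-sided KL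
divergence, and both tend to `0` because KL is nonnegative. For the mixture `m = (μ + ν)/2` one
has `dμ/dm = 2f/(f + 1)` and `(f + 1)/2 ≥ √f`, so `KL(μ‖m) ≤ KL(μ‖ν)/2`; thus
`JS(Pn n, P) ≤ KL(Pn n‖P) + KL(P‖Pn n)`. -/

lemma InformationTheory.sq_sqrt_sub_one_le_klFun {x : ℝ} (hx : 0 ≤ x) :
    (√x - 1) ^ 2 ≤ InformationTheory.klFun x := by
  rcases hx.eq_or_lt with rfl | hx
  · simp [InformationTheory.klFun_zero]
  have hs : 0 < √x := Real.sqrt_pos.2 hx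
  have hlog : 2 * (1 - (√x)⁻¹) ≤ Real.log x := by
    have := Real.one_sub_inv_le_log_of_pos hs
    rw [Real.log_sqrt hx.le] at this
    linarith
  have hsq : √x ^ 2 = x := Real.sq_sqrt hx.le
  have hinv : x * (√x)⁻¹ = √x := by rw [← div_eq_mul_inv, Real.div_sqrt]
  rw [InformationTheory.klFun_apply]
  calc (√x - 1) ^ 2 = x * (2 * (1 - (√x)⁻¹)) + 1 - x := by linear_combination hsq + 2 * hinv
    _ ≤ x * Real.log x + 1 - x := by gcongr

lemma log_two_mul_div_add_one_le {x : ℝ} (hx : 0 < x) :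
    Real.log (2 * x / (x + 1)) ≤ Real.log x / 2 := by
  have hsqrt : √x ≤ (x + 1) / 2 := by
    nlinarith [sq_nonneg (√x - 1), Real.sq_sqrt hx.le]
  have := Real.log_le_log (Real.sqrt_pos.2 hx) hsqrt
  rw [Real.log_sqrt hx.le, Real.log_div (by positivity) two_ne_zero] at this
  rw [Real.log_div (by positivity) (by positivity), Real.log_mul two_ne_zero hx.ne']
  linarith

lemma abs_log_two_mul_div_add_one_le {x : ℝ} (hx : 0 < x) :
    |Real.log (2 * x / (x + 1))| ≤ |Real.log x| + Real.log 2 := by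
  have hy : 0 < 2 * x / (x + 1) := by positivity
  have hlog2 : 0 ≤ Real.log 2 := Real.log_nonneg one_le_two
  rcases le_total x 1 with h | h
  · have h₁ : x ≤ 2 * x / (x + 1) := by rw [le_div_iff₀ (by positivity)]; nlinarith
    have h₂ : 2 * x / (x + 1) ≤ 1 := by rw [div_le_one (by positivity)]; linarith
    rw [abs_of_nonpos (Real.log_nonpos hy.le h₂), abs_of_nonpos (Real.log_nonpos hx.le h)]
    linarith [Real.log_le_log hx h₁]
  · have h₁ : 1 ≤ 2 * x / (x + 1) := by rw [le_div_iff₀ (by positivity)]; linarith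
    have h₂ : 2 * x / (x + 1) ≤ 2 := by rw [div_le_iff₀ (by positivity)]; linarith
    rw [abs_of_nonneg (Real.log_nonneg h₁)]
    linarith [Real.log_le_log hy h₂, abs_nonneg (Real.log x)]

lemma sq_sqrt_sub_one_le {x : ℝ} (hx : 0 ≤ x) : (√x - 1) ^ 2 ≤ x + 1 := by
  nlinarith [Real.sq_sqrt hx, Real.sqrt_nonneg x]

lemma sq_sqrt_add_one_le {x : ℝ} (hx : 0 ≤ x) : (√x + 1) ^ 2 ≤ 2 * x + 2 := by
  nlinarith [Real.sq_sqrt hx, sq_nonneg (√x - 1)]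

section Measures

variable {α : Type*} [MeasurableSpace α] {μ ν : Measure α}

lemma klDiv_eq_coe_klDiv [IsProbabilityMeasure μ] [IsProbabilityMeasure ν] :
    klDiv μ ν = (InformationTheory.klDiv μ ν : EReal) := by
  by_cases h : μ ≪ ν ∧ Integrable (fun x => Real.log (μ.rnDeriv ν x).toReal) μ
  · have h0 := InformationTheory.integral_llr_add_sub_measure_univ_nonneg h.1 h.2
    simp only [probReal_univ, add_sub_cancel_right] at h0
    rw [klDiv, if_pos h, InformationTheory.klDiv_of_ac_of_integrable h.1 h.2,
      EReal.coe_ennreal_ofReal]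
    simpa [llr_def] using h0
  · rw [klDiv, if_neg h, InformationTheory.klDiv_eq_top_iff.2 fun h₁ h₂ => h ⟨h₁, h₂⟩]
    rfl

lemma tvDist_le_integral_abs_rnDeriv_sub_one [IsFiniteMeasure μ] [IsFiniteMeasure ν]
    (hμν : μ ≪ ν) : tvDist μ ν ≤ ∫ x, |(μ.rnDeriv ν x).toReal - 1| ∂ν := by
  have hint : Integrable (fun x => (μ.rnDeriv ν x).toReal - 1) ν :=
    Measure.integrable_toReal_rnDeriv.sub (integrable_const 1)
  refine Real.iSup_le (fun A => ?_) (integral_nonneg fun _ => abs_nonneg _)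
  have hdiff : (μ A).toReal - (ν A).toReal = ∫ x in A, ((μ.rnDeriv ν x).toReal - 1) ∂ν := by
    rw [integral_sub Measure.integrable_toReal_rnDeriv.integrableOn (integrable_const 1),
      Measure.setIntegral_toReal_rnDeriv hμν, setIntegral_const, smul_eq_mul, mul_one]
    rfl
  calc |(μ A).toReal - (ν A).toReal|
      = |∫ x in A, ((μ.rnDeriv ν x).toReal - 1) ∂ν| := by rw [hdiff]
    _ ≤ ∫ x in A, |(μ.rnDeriv ν x).toReal - 1| ∂ν := abs_integral_le_integral_abs
    _ ≤ ∫ x, |(μ.rnDeriv ν x).toReal - 1| ∂ν :=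
      setIntegral_le_integral hint.abs (.of_forall fun _ => abs_nonneg _)

lemma integral_mul_le_L2_mul_L2_of_nonneg {f g : α → ℝ} (hf_nonneg : 0 ≤ᵐ[ν] f)
    (hg_nonneg : 0 ≤ᵐ[ν] g) (hf : MemLp f 2 ν) (hg : MemLp g 2 ν) :
    ∫ x, f x * g x ∂ν ≤ √(∫ x, f x ^ 2 ∂ν) * √(∫ x, g x ^ 2 ∂ν) := by
  have := integral_mul_le_Lp_mul_Lq_of_nonneg Real.HolderConjugate.two_two hf_nonneg hg_nonneg
    (by rwa [ENNReal.ofReal_ofNat]) (by rwa [ENNReal.ofReal_ofNat])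
  simpa only [Real.rpow_two, ← Real.sqrt_eq_rpow] using this

lemma integrable_sq_sqrt_rnDeriv_sub_one [IsFiniteMeasure μ] [IsFiniteMeasure ν] :
    Integrable (fun x => (√(μ.rnDeriv ν x).toReal - 1) ^ 2) ν :=
  (Measure.integrable_toReal_rnDeriv.add (integrable_const 1)).mono'
    (Measurable.aestronglyMeasurable (by fun_prop)) (.of_forall fun _ => by
      rw [Real.norm_of_nonneg (sq_nonneg _)]; exact sq_sqrt_sub_one_le ENNReal.toReal_nonneg)

lemma integrable_sq_sqrt_rnDeriv_add_one [IsFiniteMeasure μ] [IsFiniteMeasure ν] :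
    Integrable (fun x => (√(μ.rnDeriv ν x).toReal + 1) ^ 2) ν :=
  ((Measure.integrable_toReal_rnDeriv.const_mul 2).add (integrable_const 2)).mono'
    (Measurable.aestronglyMeasurable (by fun_prop)) (.of_forall fun _ => by
      rw [Real.norm_of_nonneg (sq_nonneg _)]; exact sq_sqrt_add_one_le ENNReal.toReal_nonneg)

lemma integral_sq_sqrt_rnDeriv_sub_one_le [IsFiniteMeasure μ] [IsFiniteMeasure ν]
    (hμν : μ ≪ ν) (h_int : Integrable (llr μ ν) μ) :
    ∫ x, (√(μ.rnDeriv ν x).toReal - 1) ^ 2 ∂ν ≤ (InformationTheory.klDiv μ ν).toReal := by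
  rw [InformationTheory.toReal_klDiv_eq_integral_klFun hμν]
  exact integral_mono integrable_sq_sqrt_rnDeriv_sub_one
    ((InformationTheory.integrable_klFun_rnDeriv_iff hμν).2 h_int)
    fun _ => InformationTheory.sq_sqrt_sub_one_le_klFun ENNReal.toReal_nonneg

lemma integral_sq_sqrt_rnDeriv_add_one_le [IsProbabilityMeasure μ] [IsProbabilityMeasure ν]
    (hμν : μ ≪ ν) : ∫ x, (√(μ.rnDeriv ν x).toReal + 1) ^ 2 ∂ν ≤ 4 := by
  have h2 : Integrable (fun x => 2 * (μ.rnDeriv ν x).toReal) ν :=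
    Measure.integrable_toReal_rnDeriv.const_mul 2
  calc ∫ x, (√(μ.rnDeriv ν x).toReal + 1) ^ 2 ∂ν
      ≤ ∫ x, (2 * (μ.rnDeriv ν x).toReal + 2) ∂ν :=
        integral_mono integrable_sq_sqrt_rnDeriv_add_one (h2.add (integrable_const 2))
          fun _ => sq_sqrt_add_one_le ENNReal.toReal_nonneg
    _ = 4 := by
      rw [integral_add h2 (integrable_const 2), integral_const_mul,
        Measure.integral_toReal_rnDeriv hμν]
      norm_num

lemma integral_abs_rnDeriv_sub_one_le [IsProbabilityMeasure μ] [IsProbabilityMeasure ν]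
    (h : InformationTheory.klDiv μ ν ≠ ∞) :
    ∫ x, |(μ.rnDeriv ν x).toReal - 1| ∂ν ≤ 2 * √(InformationTheory.klDiv μ ν).toReal := by
  obtain ⟨hμν, h_int⟩ := InformationTheory.klDiv_ne_top_iff.1 h
  set g : α → ℝ := fun x => √(μ.rnDeriv ν x).toReal
  have hfactor : ∀ x, |(μ.rnDeriv ν x).toReal - 1| = |g x - 1| * (g x + 1) := fun x => by
    rw [← abs_of_nonneg (by positivity : 0 ≤ g x + 1), ← abs_mul]
    congr 1
    nlinarith [Real.sq_sqrt (ENNReal.toReal_nonneg (a := μ.rnDeriv ν x))]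
  have hL2 : ∀ {F : α → ℝ}, Measurable F → Integrable (fun x => F x ^ 2) ν → MemLp F 2 ν :=
    fun hF hF2 => (memLp_two_iff_integrable_sq hF.aestronglyMeasurable).2 hF2
  calc ∫ x, |(μ.rnDeriv ν x).toReal - 1| ∂ν
      = ∫ x, |g x - 1| * (g x + 1) ∂ν := by simp_rw [hfactor]
    _ ≤ √(∫ x, |g x - 1| ^ 2 ∂ν) * √(∫ x, (g x + 1) ^ 2 ∂ν) :=
        integral_mul_le_L2_mul_L2_of_nonneg (.of_forall fun _ => abs_nonneg _)
          (.of_forall fun _ => by positivity)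
          (hL2 (by fun_prop) (by simpa only [sq_abs] using integrable_sq_sqrt_rnDeriv_sub_one))
          (hL2 (by fun_prop) integrable_sq_sqrt_rnDeriv_add_one)
    _ ≤ √(InformationTheory.klDiv μ ν).toReal * √4 := by
      simp only [sq_abs]
      gcongr
      · exact integral_sq_sqrt_rnDeriv_sub_one_le hμν h_int
      · exact integral_sq_sqrt_rnDeriv_add_one_le hμν
    _ = 2 * √(InformationTheory.klDiv μ ν).toReal := by
      rw [show (4 : ℝ) = 2 ^ 2 by norm_num, Real.sqrt_sq two_pos.le, mul_comm]

instance isProbabilityMeasure_midpoint [IsProbabilityMeasure μ] [IsProbabilityMeasure ν] :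
    IsProbabilityMeasure ((2 : ℝ≥0∞)⁻¹ • μ + (2 : ℝ≥0∞)⁻¹ • ν) :=
  ⟨by simp [ENNReal.inv_two_add_inv_two]⟩

lemma toReal_rnDeriv_midpoint (μ ν : Measure α) [IsFiniteMeasure μ] [IsFiniteMeasure ν] :
    (fun x => (μ.rnDeriv ((2 : ℝ≥0∞)⁻¹ • μ + (2 : ℝ≥0∞)⁻¹ • ν) x).toReal)
      =ᵐ[ν] fun x => 2 * (μ.rnDeriv ν x).toReal / ((μ.rnDeriv ν x).toReal + 1) := by
  have hsmul := (μ.rnDeriv_smul_right_of_ne_top (μ + ν) (by simp : (2 : ℝ≥0∞)⁻¹ ≠ 0)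
    (by simp)).filter_mono (ae_mono (Measure.le_add_left le_rfl))
  filter_upwards [hsmul, μ.rnDeriv_self_add ν, μ.rnDeriv_ne_top ν] with x hx hx' hfin
  rw [← smul_add, hx, Pi.smul_apply, hx', inv_inv, smul_eq_mul, ENNReal.toReal_mul,
    ENNReal.toReal_div, ENNReal.toReal_add hfin ENNReal.one_ne_top]
  simp [mul_div_assoc]

lemma InformationTheory.klDiv_midpoint_le [IsProbabilityMeasure μ] [IsProbabilityMeasure ν] :
    InformationTheory.klDiv μ ((2 : ℝ≥0∞)⁻¹ • μ + (2 : ℝ≥0∞)⁻¹ • ν)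
      ≤ InformationTheory.klDiv μ ν / 2 := by
  by_cases h : InformationTheory.klDiv μ ν = ∞
  · rw [h, ENNReal.top_div_of_ne_top ENNReal.ofNat_ne_top]
    exact le_top
  obtain ⟨hμν, h_int⟩ := InformationTheory.klDiv_ne_top_iff.1 h
  set m := (2 : ℝ≥0∞)⁻¹ • μ + (2 : ℝ≥0∞)⁻¹ • ν
  have hμm : μ ≪ m := (Measure.absolutelyContinuous_smul (by simp)).add_right _
  have hllr : llr μ m =ᵐ[μ] fun x =>
      Real.log (2 * (μ.rnDeriv ν x).toReal / ((μ.rnDeriv ν x).toReal + 1)) := by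
    filter_upwards [hμν.ae_le (toReal_rnDeriv_midpoint μ ν)] with x hx
    exact congrArg Real.log hx
  have hpos : ∀ᵐ x ∂μ, 0 < (μ.rnDeriv ν x).toReal := by
    filter_upwards [Measure.rnDeriv_pos hμν, hμν.ae_le (μ.rnDeriv_ne_top ν)] with x h0 htop
    exact ENNReal.toReal_pos h0.ne' htop
  have h_int_m : Integrable (llr μ m) μ := by
    refine (h_int.abs.add (integrable_const (Real.log 2))).mono'
      (measurable_llr μ m).aestronglyMeasurable ?_
    filter_upwards [hllr, hpos] with x hx hx0
    rw [Real.norm_eq_abs, hx]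
    exact abs_log_two_mul_div_add_one_le hx0
  have hle : ∫ x, llr μ m x ∂μ ≤ (∫ x, llr μ ν x ∂μ) / 2 := by
    rw [← integral_div]
    refine integral_mono_ae h_int_m (h_int.div_const 2) ?_
    filter_upwards [hllr, hpos] with x hx hx0
    rw [hx]
    exact log_two_mul_div_add_one_le hx0
  rw [InformationTheory.klDiv_of_ac_of_integrable hμm h_int_m,
    InformationTheory.klDiv_of_ac_of_integrable hμν h_int]
  simp only [probReal_univ, add_sub_cancel_right]
  rw [← ENNReal.ofReal_ofNat 2, ← ENNReal.ofReal_div_of_pos two_pos]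
  exact ENNReal.ofReal_le_ofReal hle

lemma klDiv_midpoint_le [IsProbabilityMeasure μ] [IsProbabilityMeasure ν] :
    klDiv μ ((2 : ℝ≥0∞)⁻¹ • μ + (2 : ℝ≥0∞)⁻¹ • ν) ≤ klDiv μ ν := by
  rw [klDiv_eq_coe_klDiv, klDiv_eq_coe_klDiv, EReal.coe_ennreal_le_coe_ennreal_iff]
  exact InformationTheory.klDiv_midpoint_le.trans ENNReal.half_le_self

lemma tvDist_le_two_mul_sqrt_of_klDiv_lt [IsProbabilityMeasure μ] [IsProbabilityMeasure ν]
    {δ : ℝ} (h : klDiv μ ν < δ) : tvDist μ ν ≤ 2 * √δ := by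
  rw [klDiv_eq_coe_klDiv] at h
  have hfin : InformationTheory.klDiv μ ν ≠ ∞ := by
    rintro htop
    rw [htop] at h
    exact not_top_lt h
  rw [← EReal.coe_ennreal_toReal hfin, EReal.coe_lt_coe_iff] at h
  calc tvDist μ ν ≤ ∫ x, |(μ.rnDeriv ν x).toReal - 1| ∂ν :=
        tvDist_le_integral_abs_rnDeriv_sub_one (InformationTheory.klDiv_ne_top_iff.1 hfin).1
    _ ≤ 2 * √(InformationTheory.klDiv μ ν).toReal := integral_abs_rnDeriv_sub_one_le hfin
    _ ≤ 2 * √δ := by gcongr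

end Measures

section SetDivergences

variable {X : Type*} [MeasurableSpace X]

noncomputable def tvExcess (P Q : Set (ProbabilityMeasure X)) : ℝ :=
  ⨆ μ : P, ⨅ ν : Q, tvDist μ.1.toMeasure ν.1.toMeasure

lemma tvDist_comm (μ ν : Measure X) : tvDist μ ν = tvDist ν μ :=
  iSup_congr fun _ => abs_sub_comm _ _

lemma genV_eq_max_tvExcess (P Q : Set (ProbabilityMeasure X)) :
    genV P Q = max (tvExcess P Q) (tvExcess Q P) := by
  rw [genV, tvExcess, tvExcess]
  congr 1
  exact iSup_congr fun _ => iInf_congr fun _ => tvDist_comm _ _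

lemma tvExcess_nonneg (P Q : Set (ProbabilityMeasure X)) : 0 ≤ tvExcess P Q :=
  Real.iSup_nonneg fun _ => Real.iInf_nonneg fun _ => Real.iSup_nonneg fun _ => abs_nonneg _

lemma exists_klDiv_lt_of_genKL_lt {P Q : Set (ProbabilityMeasure X)} {δ : EReal}
    (h : genKL P Q < δ) {μ : ProbabilityMeasure X} (hμ : μ ∈ P) :
    ∃ ν ∈ Q, klDiv μ.toMeasure ν.toMeasure < δ := by
  have : ⨅ ν ∈ Q, klDiv μ.toMeasure ν.toMeasure < δ := (le_iSup₂_of_le μ hμ le_rfl).trans_lt h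
  obtain ⟨ν, hν⟩ := iInf_lt_iff.1 this
  obtain ⟨hνQ, hlt⟩ := iInf_lt_iff.1 hν
  exact ⟨ν, hνQ, hlt⟩

lemma tvExcess_le_of_genKL_lt {P Q : Set (ProbabilityMeasure X)} {δ : ℝ}
    (h : genKL P Q < δ) : tvExcess P Q ≤ 2 * √δ := by
  refine Real.iSup_le (fun μ => ?_) (by positivity)
  obtain ⟨ν, hν, hlt⟩ := exists_klDiv_lt_of_genKL_lt h μ.2
  have hbdd : BddBelow (Set.range fun ν : Q => tvDist μ.1.toMeasure ν.1.toMeasure) :=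
    ⟨0, by rintro _ ⟨ν', rfl⟩; exact Real.iSup_nonneg fun _ => abs_nonneg _⟩
  exact (ciInf_le hbdd ⟨ν, hν⟩).trans (tvDist_le_two_mul_sqrt_of_klDiv_lt hlt)

lemma tendsto_tvExcess {ι : Type*} {l : Filter ι} {P Q : ι → Set (ProbabilityMeasure X)}
    (h : Tendsto (fun i => genKL (P i) (Q i)) l (𝓝 0)) :
    Tendsto (fun i => tvExcess (P i) (Q i)) l (𝓝 0) := by
  refine tendsto_order.2 ⟨fun a ha => .of_forall fun i => ha.trans_le (tvExcess_nonneg _ _),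
    fun ε hε => ?_⟩
  have hδ : (0 : EReal) < ((ε / 4) ^ 2 : ℝ) := EReal.coe_pos.2 (by positivity)
  filter_upwards [(tendsto_order.1 h).2 _ hδ] with i hi
  calc tvExcess (P i) (Q i) ≤ 2 * √((ε / 4) ^ 2) := tvExcess_le_of_genKL_lt hi
    _ = ε / 2 := by rw [Real.sqrt_sq (by positivity)]; ring
    _ < ε := half_lt_self hε

lemma genKL_nonneg {P : Set (ProbabilityMeasure X)} (hP : P.Nonempty)
    (Q : Set (ProbabilityMeasure X)) : 0 ≤ genKL P Q := by
  obtain ⟨μ, hμ⟩ := hP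
  refine le_iSup₂_of_le μ hμ (le_iInf₂ fun ν _ => ?_)
  rw [klDiv_eq_coe_klDiv]
  exact EReal.coe_ennreal_nonneg _

lemma genKL_le_genKL_of_forall {P Q Q' : Set (ProbabilityMeasure X)}
    (h : ∀ μ ∈ P, ∀ ν ∈ Q, ∃ κ ∈ Q',
      klDiv μ.toMeasure κ.toMeasure ≤ klDiv μ.toMeasure ν.toMeasure) :
    genKL P Q' ≤ genKL P Q :=
  iSup₂_mono fun μ hμ => le_iInf₂ fun ν hν =>
    let ⟨κ, hκ, hle⟩ := h μ hμ ν hν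
    iInf₂_le_of_le κ hκ hle

lemma genKL_midSet_left_le (P Q : Set (ProbabilityMeasure X)) :
    genKL P (midSet P Q) ≤ genKL P Q :=
  genKL_le_genKL_of_forall fun μ hμ ν hν =>
    ⟨⟨_, inferInstance⟩, ⟨μ, hμ, ν, hν, rfl⟩, klDiv_midpoint_le⟩

lemma genKL_midSet_right_le (P Q : Set (ProbabilityMeasure X)) :
    genKL Q (midSet P Q) ≤ genKL Q P :=
  genKL_le_genKL_of_forall fun ν hν μ hμ =>
    ⟨⟨_, inferInstance⟩, ⟨μ, hμ, ν, hν, add_comm _ _⟩, klDiv_midpoint_le⟩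

lemma genJS_nonneg {P Q : Set (ProbabilityMeasure X)} (hP : P.Nonempty) (hQ : Q.Nonempty) :
    0 ≤ genJS P Q :=
  add_nonneg (mul_nonneg (by norm_num) (genKL_nonneg hP _))
    (mul_nonneg (by norm_num) (genKL_nonneg hQ _))

lemma genJS_le_genKL_add_genKL {P Q : Set (ProbabilityMeasure X)} (hP : P.Nonempty)
    (hQ : Q.Nonempty) : genJS P Q ≤ genKL P Q + genKL Q P := by
  have hhalf : ((1 / 2 : ℝ) : EReal) ≤ 1 := by exact_mod_cast (by norm_num : (1 / 2 : ℝ) ≤ 1)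
  exact add_le_add
    ((mul_le_of_le_one_left (genKL_nonneg hP _) hhalf).trans (genKL_midSet_left_le P Q))
    ((mul_le_of_le_one_left (genKL_nonneg hQ _) hhalf).trans (genKL_midSet_right_le P Q))

end SetDivergences

theorem kl_convergence_general {X : Type*} [MeasurableSpace X]
    (Pn : ℕ → Set (ProbabilityMeasure X)) (P : Set (ProbabilityMeasure X))
    (hne : ∀ n, (Pn n).Nonempty) (hPne : P.Nonempty)
    (h : Tendsto (fun n => genKL (Pn n) P + genKL P (Pn n)) atTop (𝓝 (0 : EReal))) :
    Tendsto (fun n => genV (Pn n) P) atTop (𝓝 (0 : ℝ)) ∧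
    Tendsto (fun n => genJS (Pn n) P) atTop (𝓝 (0 : EReal)) := by
  have hKL₁ : Tendsto (fun n => genKL (Pn n) P) atTop (𝓝 0) :=
    tendsto_of_tendsto_of_tendsto_of_le_of_le tendsto_const_nhds h
      (fun n => genKL_nonneg (hne n) P) fun n => le_add_of_nonneg_right (genKL_nonneg hPne _)
  have hKL₂ : Tendsto (fun n => genKL P (Pn n)) atTop (𝓝 0) :=
    tendsto_of_tendsto_of_tendsto_of_le_of_le tendsto_const_nhds h
      (fun n => genKL_nonneg hPne _) fun n => le_add_of_nonneg_left (genKL_nonneg (hne n) P)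
  refine ⟨?_, tendsto_of_tendsto_of_tendsto_of_le_of_le tendsto_const_nhds h
    (fun n => genJS_nonneg (hne n) hPne) fun n => genJS_le_genKL_add_genKL (hne n) hPne⟩
  simp only [genV_eq_max_tvExcess]
  simpa using (tendsto_tvExcess hKL₁).max (tendsto_tvExcess hKL₂)

theorem kl_convergence {X : Type*} [MeasurableSpace X] [TopologicalSpace X]
    [PolishSpace X] [BorelSpace X] (Pn : ℕ → Set (ProbabilityMeasure X)) (P : Set (ProbabilityMeasure X))
    (hne : ∀ n, (Pn n).Nonempty) (hc : ∀ n, IsCompact (Pn n)) (hconv : ∀ n, ConvexPM (Pn n))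
    (hPne : P.Nonempty) (hPc : IsCompact P) (hPconv : ConvexPM P)
    (h : Tendsto (fun n => genKL (Pn n) P + genKL P (Pn n)) atTop (𝓝 (0 : EReal))) :
    Tendsto (fun n => genV (Pn n) P) atTop (𝓝 (0 : ℝ)) ∧
    Tendsto (fun n => genJS (Pn n) P) atTop (𝓝 (0 : EReal)) :=
  kl_convergence_general Pn P hne hPne h
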